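/- Let G be a finite group, k a positive integer, and n a positive integer coprime to the order of G. Let X be the set of all γ_k-values in G and Y the set of all n-th powers of γ_k-values. Then X = Y. -/

import Mathlib

/-!
Choose, by Dirichlet's theorem, a prime `p > |G|²` with `p ≡ n (mod |G|)`, so that `g ^ n = g ^ p`
for all `g`. In `𝔽_p[G]` the sum of the coefficients over a conjugacy class is a trace `τ`, and a
trace in characteristic `p` satisfies `τ ((∑ vᵢ) ^ p) = ∑ τ (vᵢ ^ p)`: expanding the power, the
non-constant words of length `p` fall into rotation orbits of size `p`. Applied to products of class
sums, this shows that the number of pairs `(u, v)` with `u ~ a`, `v ~ b`, `u v ~ x` does not change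
modulo `p` when `a, b, x` are replaced by their `p`-th powers; being smaller than `p`, it does not
change at all. Hence `x ∈ aᴳ bᴳ` implies `x ^ p ∈ (a ^ p)ᴳ (b ^ p)ᴳ`. As `⁅h, t⁆ = h · t h⁻¹ t⁻¹`,
the `p`-th power of a `γ_{k+1}`-value `⁅h, t⁆` is then a commutator `⁅u, s⁆` with `u` conjugate to
`h ^ p`, a `γ_k`-value by induction. So `g ↦ g ^ n` maps the finite set of `γ_k`-values injectively
into itself, hence onto itself.
-/

open scoped commutatorElement

/-- `lcomm x n` is the left-normed commutator `[x 0, x 1, ..., x n]`. -/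
def lcomm {G : Type*} [Group G] (x : ℕ → G) : ℕ → G
  | 0 => x 0
  | n + 1 => ⁅lcomm x n, x (n + 1)⁆

/-- `g` is a `γ_k`-value: a left-normed commutator of `k` elements of `G`. -/
def IsGammaVal {G : Type*} [Group G] (k : ℕ) (g : G) : Prop :=
  ∃ y : ℕ → G, g = lcomm y (k - 1)

open Finset MonoidAlgebra

namespace Equiv.Perm

variable {α : Type*} [Fintype α] [DecidableEq α] {p n : ℕ} [Fact p.Prime]

theorem card_filter_modEq_card_filter_fixed {σ : Perm α} (hσ : σ ^ p ^ n = 1) {P : α → Prop}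
    [DecidablePred P] (hP : ∀ a, P (σ a) ↔ P a) :
    #{a | P a} ≡ #{a | σ a = a ∧ P a} [MOD p] := by
  set τ : Perm {a // P a} := σ.subtypePerm hP
  have hτ : τ ^ p ^ n = 1 := by
    ext a
    simp [τ, subtypePerm_pow, hσ]
  have hfix : #τ.supportᶜ = #{a | σ a = a ∧ P a} := by
    refine card_bij' (fun a _ => a.1) (fun a ha => ⟨a, (mem_filter.1 ha).2.2⟩) ?_ ?_
      (fun _ _ => rfl) (fun _ _ => rfl)
    · intro a ha
      simp only [mem_compl, mem_support, not_not, τ, Subtype.ext_iff, subtypePerm_apply] at ha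
      simp [ha, a.2]
    · intro a ha
      simp only [mem_filter, mem_univ, true_and] at ha
      simp [τ, ha.1]
  rw [← hfix, ← Fintype.card_subtype]
  exact (card_compl_support_modEq hτ).symm

theorem sum_eq_sum_filter_fixed {M : Type*} [AddCommGroup M] (hM : ∀ m : M, p • m = 0)
    {σ : Perm α} (hσ : σ ^ p ^ n = 1) {φ : α → M} (hφ : ∀ a, φ (σ a) = φ a) :
    ∑ a, φ a = ∑ a with σ a = a, φ a := by
  classical
  have hmaps : ∀ a ∈ (univ : Finset α), φ a ∈ univ.image φ :=
    fun a _ => mem_image_of_mem φ (mem_univ a)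
  rw [← sum_fiberwise_of_maps_to hmaps, ← sum_fiberwise_of_maps_to fun a _ => hmaps a (mem_univ a)]
  refine sum_congr rfl fun m _ => ?_
  rw [sum_congr rfl fun a ha => (mem_filter.1 ha).2, sum_const, filter_filter,
    sum_congr rfl fun a ha => (mem_filter.1 ha).2.2, sum_const]
  -- each fibre of `φ` is `σ`-stable, so the fixed-point count applies to it
  refine nsmul_eq_nsmul_iff_modEq.2 ((card_filter_modEq_card_filter_fixed hσ fun a => ?_).of_dvd
    (addOrderOf_dvd_of_nsmul_eq_zero (hM m)))
  rw [hφ]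

end Equiv.Perm

theorem sum_pow_eq_sum_prod_ofFn {ι A : Type*} [Fintype ι] [Semiring A] (v : ι → A) (n : ℕ) :
    (∑ i, v i) ^ n = ∑ f : Fin n → ι, (List.ofFn fun j => v (f j)).prod := by
  induction n with
  | zero => simp
  | succ n ih =>
    rw [pow_succ', ih, sum_mul_sum, ← Fintype.sum_prod_type',
      ← (Fin.consEquiv fun _ => ι).sum_comp]
    simp [List.ofFn_succ]

theorem finRotate_pow_self (n : ℕ) : finRotate n ^ n = 1 := by
  rcases lt_or_ge n 2 with hn | hn
  · interval_cases n <;> exact Subsingleton.elim _ _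
  · have h := pow_orderOf_eq_one (finRotate n)
    rwa [(isCycle_finRotate_of_le hn).orderOf, support_finRotate_of_le hn, card_univ,
      Fintype.card_fin] at h

theorem comp_finRotate_eq_self_iff {ι : Type*} {n : ℕ} (f : Fin (n + 1) → ι) :
    f ∘ finRotate (n + 1) = f ↔ ∃ i, Function.const _ i = f := by
  refine ⟨fun h => ⟨f 0, funext fun j => ?_⟩, fun ⟨i, hi⟩ => hi ▸ rfl⟩
  induction j using Fin.induction with
  | zero => rfl
  | succ j ih =>
    have hj := congrFun h j.castSucc
    rw [Function.comp_apply, finRotate_apply, Fin.coeSucc_eq_succ] at hj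
    exact ih.trans hj.symm

theorem map_prod_ofFn_comp_finRotate {A M : Type*} [Monoid A] {τ : A → M}
    (hτ : ∀ a b, τ (a * b) = τ (b * a)) {n : ℕ} (g : Fin n → A) :
    τ (List.ofFn (g ∘ finRotate n)).prod = τ (List.ofFn g).prod := by
  cases n with
  | zero => rfl
  | succ n =>
    have hrot : Fin.cons (g 0) (Fin.tail g) ∘ finRotate (n + 1) = Fin.snoc (Fin.tail g) (g 0) :=
      (Fin.snoc_eq_cons_rotate _ _).symm
    rw [← Fin.cons_self_tail g, hrot, List.ofFn_cons, List.ofFn_succ']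
    simp [hτ]

theorem map_sum_pow_eq_sum_map_pow {ι A M : Type*} [Fintype ι] [Semiring A] [AddCommGroup M]
    {p : ℕ} [hp : Fact p.Prime] (hM : ∀ m : M, p • m = 0) (τ : A →+ M)
    (hτ : ∀ a b, τ (a * b) = τ (b * a)) (v : ι → A) :
    τ ((∑ i, v i) ^ p) = ∑ i, τ (v i ^ p) := by
  classical
  obtain ⟨n, rfl⟩ : ∃ n, p = n + 1 := Nat.exists_eq_add_one.2 hp.out.pos
  let σ : Equiv.Perm (Fin (n + 1) → ι) := (finRotate (n + 1)).symm.arrowCongr (Equiv.refl ι)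
  have hσ_apply : ∀ f, σ f = f ∘ finRotate (n + 1) := fun f => rfl
  have hσ_pow_apply : ∀ k f, (σ ^ k) f = f ∘ ⇑(finRotate (n + 1) ^ k) := by
    intro k f
    induction k with
    | zero => rfl
    | succ k ih =>
      rw [pow_succ', Equiv.Perm.mul_apply, ih, hσ_apply, pow_succ, Equiv.Perm.coe_mul]
      rfl
  have hσ : σ ^ (n + 1) ^ 1 = 1 := by
    ext f : 1
    rw [pow_one, hσ_pow_apply, finRotate_pow_self, Equiv.Perm.coe_one, Function.comp_id,
      Equiv.Perm.one_apply]
  have hfixed : univ.filter (fun f => σ f = f) =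
      univ.map ⟨Function.const _, Function.const_injective⟩ := by
    ext f
    simpa [hσ_apply] using comp_finRotate_eq_self_iff f
  rw [sum_pow_eq_sum_prod_ofFn, map_sum, Equiv.Perm.sum_eq_sum_filter_fixed hM hσ
    (fun f => map_prod_ofFn_comp_finRotate hτ (v ∘ f)), hfixed, sum_map]
  simp [List.ofFn_const, pow_succ']

theorem IsConj.inv {G : Type*} [Group G] {a b : G} (h : IsConj a b) : IsConj a⁻¹ b⁻¹ := by
  obtain ⟨c, rfl⟩ := isConj_iff.1 h
  exact isConj_iff.2 ⟨c, by group⟩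

theorem isConj_pow_iff_of_coprime {G : Type*} [Group G] {n : ℕ} (hn : (Nat.card G).Coprime n)
    {x y : G} : IsConj (x ^ n) (y ^ n) ↔ IsConj x y := by
  refine ⟨fun h => ?_, IsConj.pow n⟩
  obtain ⟨c, hc⟩ := isConj_iff.1 h
  exact isConj_iff.2 ⟨c, hn.pow_left_bijective.1 (by simpa only [conj_pow] using hc)⟩

section ConjProductCount

variable {G : Type*} [Group G] [Fintype G] [DecidableEq G]

def conjProductCount (a b x : G) : ℕ :=
  #{q : G × G | IsConj a q.1 ∧ IsConj b q.2 ∧ IsConj x (q.1 * q.2)}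

theorem conjProductCount_le (a b x : G) : conjProductCount a b x ≤ Nat.card G ^ 2 := by
  rw [Nat.card_eq_fintype_card, sq, ← Fintype.card_prod]
  exact card_le_univ _

end ConjProductCount

section GroupAlgebra

variable {G : Type*} [Group G] [Fintype G] [DecidableEq G] (k : Type*) [Semiring k]

noncomputable def classSum (a : G) : MonoidAlgebra k G := ∑ u with IsConj a u, single u 1

noncomputable def classTrace (x : G) : MonoidAlgebra k G →+ k :=
  ∑ g with IsConj x g, (Finsupp.applyAddHom g).comp coeffAddEquiv.toAddMonoidHom

variable {k}

theorem classTrace_apply (x : G) (f : MonoidAlgebra k G) :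
    classTrace k x f = ∑ g with IsConj x g, f.coeff g := by
  simp [classTrace]

theorem classTrace_single (x g : G) (r : k) :
    classTrace k x (single g r) = if IsConj x g then r else 0 := by
  simp [classTrace_apply, coeff_single, Finsupp.single_apply]

theorem classSum_commute (a : G) (f : MonoidAlgebra k G) : Commute (classSum k a) f := by
  induction f using MonoidAlgebra.induction_linear with
  | zero => exact Commute.zero_right _
  | add f g hf hg => exact hf.add_right hg
  | single g r =>
    simp only [Commute, SemiconjBy, classSum, sum_mul, mul_sum, single_mul_single, one_mul,
      mul_one]
    refine sum_nbij' (fun u => g⁻¹ * u * g) (fun u => g * u * g⁻¹) ?_ ?_ ?_ ?_ ?_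
    · intro u hu
      simp only [mem_filter, mem_univ, true_and] at hu ⊢
      exact hu.trans (isConj_iff.2 ⟨g⁻¹, by group⟩)
    · intro u hu
      simp only [mem_filter, mem_univ, true_and] at hu ⊢
      exact hu.trans (isConj_iff.2 ⟨g, rfl⟩)
    · intro u _; group
    · intro u _; group
    · intro u _; congr 1; group

theorem classTrace_classSum_mul_classSum (a b x : G) :
    classTrace k x (classSum k a * classSum k b) = conjProductCount a b x := by
  rw [classSum, classSum, sum_mul_sum, ← sum_product', map_sum]
  simp only [single_mul_single, one_mul, classTrace_single, sum_boole, conjProductCount]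
  congr 2
  ext q
  simp [and_assoc]

theorem sum_single_pow_eq_classSum_pow {n : ℕ} (hn : (Nat.card G).Coprime n) (a : G) :
    ∑ u with IsConj a u, single (u ^ n) (1 : k) = classSum k (a ^ n) := by
  have himage : ({u | IsConj (a ^ n) u} : Finset G) = image (· ^ n) {u | IsConj a u} := by
    ext v
    obtain ⟨w, rfl⟩ := hn.pow_left_bijective.2 v
    simp only [mem_filter, mem_univ, true_and, mem_image, hn.pow_left_bijective.1.eq_iff,
      isConj_pow_iff_of_coprime hn, exists_eq_right]
  rw [classSum, himage, sum_image fun u _ v _ h => hn.pow_left_bijective.1 h]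

end GroupAlgebra

section Frobenius

variable {G : Type*} [Group G] [Fintype G] [DecidableEq G]

theorem classTrace_mul_comm {k : Type*} [CommSemiring k] (x : G) (f f' : MonoidAlgebra k G) :
    classTrace k x (f * f') = classTrace k x (f' * f) := by
  induction f using MonoidAlgebra.induction_linear with
  | zero => simp
  | add f₁ f₂ h₁ h₂ => simp [add_mul, mul_add, h₁, h₂]
  | single g r =>
    induction f' using MonoidAlgebra.induction_linear with
    | zero => simp
    | add f₁ f₂ h₁ h₂ => simp [add_mul, mul_add, h₁, h₂]
    | single g' r' =>
      have hconj : IsConj x (g * g') ↔ IsConj x (g' * g) :=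
        ⟨fun h => h.trans (isConj_iff.2 ⟨g', by group⟩),
          fun h => h.trans (isConj_iff.2 ⟨g, by group⟩)⟩
      simp only [single_mul_single, classTrace_single, hconj, mul_comm r]

variable {p : ℕ} [Fact p.Prime]

theorem classTrace_pow (hcop : (Nat.card G).Coprime p) (x : G) (f : MonoidAlgebra (ZMod p) G) :
    classTrace (ZMod p) (x ^ p) (f ^ p) = classTrace (ZMod p) x f := by
  have hf : f = ∑ g, single g (f.coeff g) := by
    ext g; simp [coeff_sum, coeff_single]
  conv_lhs => rw [hf]
  rw [map_sum_pow_eq_sum_map_pow (ZModModule.char_nsmul_eq_zero p) _ (classTrace_mul_comm _),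
    classTrace_apply]
  simp only [single_pow, classTrace_single, ZMod.pow_card, isConj_pow_iff_of_coprime hcop,
    ← sum_filter]

theorem classTrace_mul_classSum_pow (hcop : (Nat.card G).Coprime p)
    {c : MonoidAlgebra (ZMod p) G} (hc : ∀ f, Commute c f) (a y : G) :
    classTrace (ZMod p) y (c * classSum (ZMod p) a ^ p) =
      classTrace (ZMod p) y (c * classSum (ZMod p) (a ^ p)) := by
  let τ := (classTrace (ZMod p) y).comp (AddMonoidHom.mulLeft c)
  have hτ : ∀ f f', τ (f * f') = τ (f' * f) := by
    intro f f'
    simp only [τ, AddMonoidHom.comp_apply, AddMonoidHom.coe_mulLeft]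
    rw [← mul_assoc, classTrace_mul_comm, ← mul_assoc, ← (hc f').eq, mul_assoc]
  change τ (classSum (ZMod p) a ^ p) = τ (classSum (ZMod p) (a ^ p))
  rw [classSum, ← sum_coe_sort, map_sum_pow_eq_sum_map_pow (ZModModule.char_nsmul_eq_zero p) τ hτ,
    ← sum_single_pow_eq_classSum_pow hcop, map_sum]
  simp only [single_pow, one_pow]
  exact sum_coe_sort _ fun u => τ (single (u ^ p) 1)

theorem conjProductCount_pow (hG : Nat.card G ^ 2 < p) (a b x : G) :
    conjProductCount (a ^ p) (b ^ p) (x ^ p) = conjProductCount a b x := by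
  have hcop : (Nat.card G).Coprime p := ((Fact.out : p.Prime).coprime_iff_not_dvd.2 fun hdvd =>
    ((Nat.le_of_dvd Nat.card_pos hdvd).trans (Nat.le_self_pow two_ne_zero _)).not_gt hG).symm
  let z : G → MonoidAlgebra (ZMod p) G := classSum (ZMod p)
  have hmod : (conjProductCount (a ^ p) (b ^ p) (x ^ p) : ZMod p) = conjProductCount a b x :=
    calc (conjProductCount (a ^ p) (b ^ p) (x ^ p) : ZMod p)
        = classTrace (ZMod p) (x ^ p) (z (a ^ p) * z (b ^ p)) :=
          (classTrace_classSum_mul_classSum _ _ _).symm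
      _ = classTrace (ZMod p) (x ^ p) (z (b ^ p) * z a ^ p) := by
          rw [(classSum_commute _ _).eq, classTrace_mul_classSum_pow hcop (classSum_commute _)]
      _ = classTrace (ZMod p) (x ^ p) (z a ^ p * z b ^ p) := by
          rw [classTrace_mul_classSum_pow hcop fun f => (classSum_commute a f).pow_left p,
            (classSum_commute _ _).eq]
      _ = classTrace (ZMod p) (x ^ p) ((z a * z b) ^ p) := by
          rw [(classSum_commute a _).mul_pow]
      _ = conjProductCount a b x := by
          rw [classTrace_pow hcop, classTrace_classSum_mul_classSum]
  have hlt : ∀ a b x : G, conjProductCount a b x < p :=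
    fun a b x => (conjProductCount_le a b x).trans_lt hG
  rwa [ZMod.natCast_eq_natCast_iff', Nat.mod_eq_of_lt (hlt _ _ _), Nat.mod_eq_of_lt (hlt _ _ _)]
    at hmod

end Frobenius

theorem exists_isConj_mul_pow_of_coprime {G : Type*} [Group G] [Finite G] {n : ℕ}
    (hn : n.Coprime (Nat.card G)) {a b u v : G} (hu : IsConj a u) (hv : IsConj b v) :
    ∃ u' v', IsConj (a ^ n) u' ∧ IsConj (b ^ n) v' ∧ (u * v) ^ n = u' * v' := by
  cases nonempty_fintype G
  classical
  have : NeZero (Nat.card G) := ⟨Nat.card_pos.ne'⟩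
  obtain ⟨p, hpG, hp, hpn⟩ := Nat.forall_exists_prime_gt_and_eq_mod
    ((ZMod.isUnit_iff_coprime n _).2 hn) (Nat.card G ^ 2)
  have : Fact p.Prime := ⟨hp⟩
  have hpow : ∀ g : G, g ^ p = g ^ n := fun g =>
    pow_eq_pow_iff_modEq.2 (((ZMod.natCast_eq_natCast_iff _ _ _).1 hpn).of_dvd
      (orderOf_dvd_natCard g))
  have hpos : 0 < conjProductCount (a ^ p) (b ^ p) ((u * v) ^ p) := by
    rw [conjProductCount_pow hpG]
    exact card_pos.2 ⟨(u, v), mem_filter.2 ⟨mem_univ _, hu, hv, IsConj.refl _⟩⟩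
  obtain ⟨⟨u', v'⟩, huv⟩ := card_pos.1 hpos
  obtain ⟨hu', hv', hc⟩ := (mem_filter.1 huv).2
  obtain ⟨c, hc⟩ := isConj_iff.1 hc
  have hconj : ∀ g : G, IsConj g (c⁻¹ * g * c) := fun g => isConj_iff.2 ⟨c⁻¹, by group⟩
  refine ⟨c⁻¹ * u' * c, c⁻¹ * v' * c, ?_, ?_, ?_⟩
  · rw [← hpow]; exact hu'.trans (hconj u')
  · rw [← hpow]; exact hv'.trans (hconj v')
  · rw [← hpow, show c⁻¹ * u' * c * (c⁻¹ * v' * c) = c⁻¹ * (u' * v') * c by group, ← hc]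
    group

section GammaValues

variable {G : Type*} [Group G]

theorem exists_mul_eq_commutatorElement_of_isConj_inv {u v : G} (h : IsConj u⁻¹ v) :
    ∃ s, u * v = ⁅u, s⁆ := by
  obtain ⟨s, rfl⟩ := isConj_iff.1 h
  exact ⟨s, by rw [commutatorElement_def]; group⟩

theorem lcomm_congr {y z : ℕ → G} {m : ℕ} (h : ∀ i ≤ m, y i = z i) : lcomm y m = lcomm z m := by
  induction m with
  | zero => exact h 0 le_rfl
  | succ m ih => simp only [lcomm, ih fun i hi => h i (hi.trans m.le_succ), h (m + 1) le_rfl]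

theorem map_lcomm {H : Type*} [Group H] (φ : G →* H) (y : ℕ → G) (m : ℕ) :
    lcomm (φ ∘ y) m = φ (lcomm y m) := by
  induction m with
  | zero => rfl
  | succ m ih => simp only [lcomm, ih, map_commutatorElement, Function.comp_apply]

theorem isGammaVal_of_le_one {k : ℕ} (hk : k ≤ 1) (g : G) : IsGammaVal k g :=
  ⟨fun _ => g, by rw [Nat.sub_eq_zero_of_le hk]; rfl⟩

theorem isGammaVal_add_two_iff {k : ℕ} {g : G} :
    IsGammaVal (k + 2) g ↔ ∃ h t : G, IsGammaVal (k + 1) h ∧ g = ⁅h, t⁆ := by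
  constructor
  · rintro ⟨y, rfl⟩
    exact ⟨lcomm y k, y (k + 1), ⟨y, rfl⟩, rfl⟩
  · rintro ⟨h, t, ⟨z, rfl⟩, rfl⟩
    refine ⟨Function.update z (k + 1) t, ?_⟩
    show _ = ⁅lcomm _ k, _⁆
    rw [Function.update_self, lcomm_congr fun i hi => Function.update_of_ne (by omega) t z]
    rfl

theorem IsGammaVal.of_isConj {k : ℕ} {g g' : G} (hg : IsGammaVal k g) (h : IsConj g g') :
    IsGammaVal k g' := by
  obtain ⟨y, rfl⟩ := hg
  obtain ⟨c, rfl⟩ := isConj_iff.1 h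
  exact ⟨MulAut.conj c ∘ y, (map_lcomm (MulAut.conj c).toMonoidHom y _).symm⟩

theorem IsGammaVal.pow [Finite G] {k n : ℕ} (hn : n.Coprime (Nat.card G)) {g : G}
    (hg : IsGammaVal k g) : IsGammaVal k (g ^ n) := by
  induction k generalizing g with
  | zero => exact isGammaVal_of_le_one (Nat.zero_le _) _
  | succ k ih =>
    rcases k with _ | k
    · exact isGammaVal_of_le_one le_rfl _
    obtain ⟨h, t, hh, rfl⟩ := isGammaVal_add_two_iff.1 hg
    have hcomm : ⁅h, t⁆ = h * (t * h⁻¹ * t⁻¹) := by rw [commutatorElement_def]; group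
    obtain ⟨u, v, hu, hv, huv⟩ :=
      exists_isConj_mul_pow_of_coprime hn (IsConj.refl h) (isConj_iff.2 ⟨t, rfl⟩)
    rw [inv_pow] at hv
    obtain ⟨s, hs⟩ := exists_mul_eq_commutatorElement_of_isConj_inv (hu.inv.symm.trans hv)
    exact isGammaVal_add_two_iff.2 ⟨u, s, (ih hh).of_isConj hu, by rw [hcomm, huv, hs]⟩

end GammaValues

theorem stmt8_general {G : Type*} [Group G] [Finite G] (k n : ℕ)
    (hcop : n.Coprime (Nat.card G)) :
    {x : G | IsGammaVal k x} = {x : G | ∃ g : G, IsGammaVal k g ∧ x = g ^ n} := by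
  have hmaps : Set.MapsTo (fun g : G => g ^ n) {x | IsGammaVal k x} {x | IsGammaVal k x} :=
    fun _ hg => hg.pow hcop
  have hbij := ((Set.toFinite _).injOn_iff_bijOn_of_mapsTo hmaps).1
    hcop.symm.pow_left_bijective.1.injOn
  ext x
  refine ⟨fun hx => ?_, fun ⟨g, hg, hx⟩ => hx ▸ hg.pow hcop⟩
  obtain ⟨g, hg, rfl⟩ := hbij.surjOn hx
  exact ⟨g, hg, rfl⟩

theorem stmt8 {G : Type*} [Group G] [Finite G] (k n : ℕ) (hk : 0 < k) (hn : 0 < n)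
    (hcop : n.Coprime (Nat.card G)) :
    {x : G | IsGammaVal k x} = {x : G | ∃ g : G, IsGammaVal k g ∧ x = g ^ n} :=
  stmt8_general k n hcop
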